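/- arXiv:1901.01615 — 15 statements merged into one kernel-verified Lean document; each statement's English description precedes it below -/
import Mathlib

section
/- A residuated binar satisfies the identity x·(y ∧ z) = x·y ∧ x·z (for all x,y,z) if and only if it satisfies x·z ∧ y·w ≤ (x ∨ y)·(z ∧ w) for all x,y,z,w. -/
theorem stmt3 {A : Type*} [Lattice A] (mul ld rd : A → A → A)
    (resR : ∀ x y z : A, mul x y ≤ z ↔ x ≤ rd z y)
    (resL : ∀ x y z : A, mul x y ≤ z ↔ y ≤ ld x z) :
    (∀ x y z : A, mul x (y ⊓ z) = mul x y ⊓ mul x z) ↔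
    (∀ x y z w : A, mul x z ⊓ mul y w ≤ mul (x ⊔ y) (z ⊓ w)) := by
  have monoL : ∀ x x' y : A, x ≤ x' → mul x y ≤ mul x' y := by
    intro x x' y h
    exact (resR x y (mul x' y)).mpr (h.trans ((resR x' y (mul x' y)).mp le_rfl))
  have monoR : ∀ x y y' : A, y ≤ y' → mul x y ≤ mul x y' := by
    intro x y y' h
    exact (resL x y (mul x y')).mpr (h.trans ((resL x y' (mul x y')).mp le_rfl))
  constructor
  · intro hd x y z w
    have h1 : mul x z ⊓ mul y w ≤ mul (x ⊔ y) z :=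
      inf_le_left.trans (monoL x (x ⊔ y) z le_sup_left)
    have h2 : mul x z ⊓ mul y w ≤ mul (x ⊔ y) w :=
      inf_le_right.trans (monoL y (x ⊔ y) w le_sup_right)
    rw [hd]
    exact le_inf h1 h2
  · intro hi x y z
    refine le_antisymm (le_inf (monoR x _ y inf_le_left) (monoR x _ z inf_le_right)) ?_
    simpa using hi x x y z
end

section
/- A residuated binar satisfies the identity x\(y ∨ z) = (x\y) ∨ (x\z) (for all x,y,z) if and only if it satisfies (x ∨ y)\(z ∨ w) ≤ (x\z) ∨ (y\w) for all x,y,z,w. -/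
theorem stmt4 {A : Type*} [Lattice A] (mul ld rd : A → A → A)
    (resR : ∀ x y z : A, mul x y ≤ z ↔ x ≤ rd z y)
    (resL : ∀ x y z : A, mul x y ≤ z ↔ y ≤ ld x z) :
    (∀ x y z : A, ld x (y ⊔ z) = ld x y ⊔ ld x z) ↔
    (∀ x y z w : A, ld (x ⊔ y) (z ⊔ w) ≤ ld x z ⊔ ld y w) := by
  -- isotone in numerator
  have iso : ∀ x y z : A, y ≤ z → ld x y ≤ ld x z := by
    intro x y z h
    exact (resL x (ld x y) z).mp (le_trans ((resL x (ld x y) y).mpr le_rfl) h)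
  -- antitone in denominator
  have anti : ∀ x y z : A, x ≤ y → ld y z ≤ ld x z := by
    intro x y z h
    have h1 : mul y (ld y z) ≤ z := (resL y (ld y z) z).mpr le_rfl
    have h2 : x ≤ rd z (ld y z) := le_trans h ((resR y (ld y z) z).mp h1)
    exact (resL x (ld y z) z).mp ((resR x (ld y z) z).mpr h2)
  constructor
  · intro H x y z w
    calc ld (x ⊔ y) (z ⊔ w) = ld (x ⊔ y) z ⊔ ld (x ⊔ y) w := H _ _ _
      _ ≤ ld x z ⊔ ld y w :=
        sup_le_sup (anti _ _ _ le_sup_left) (anti _ _ _ le_sup_right)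
  · intro H x y z
    refine le_antisymm ?_ (sup_le (iso _ _ _ le_sup_left) (iso _ _ _ le_sup_right))
    have := H x x y z
    simpa using this
end

section
/- A residuated binar satisfies the identity (x ∧ y)\z = (x\z) ∨ (y\z) (for all x,y,z) if and only if it satisfies (x ∧ y)\(z ∧ w) ≤ (x\z) ∨ (y\w) for all x,y,z,w. -/
theorem stmt5 {A : Type*} [Lattice A] (mul ld rd : A → A → A)
    (resR : ∀ x y z : A, mul x y ≤ z ↔ x ≤ rd z y)
    (resL : ∀ x y z : A, mul x y ≤ z ↔ y ≤ ld x z) :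
    (∀ x y z : A, ld (x ⊓ y) z = ld x z ⊔ ld y z) ↔
    (∀ x y z w : A, ld (x ⊓ y) (z ⊓ w) ≤ ld x z ⊔ ld y w) := by
  have ldmono : ∀ x z z' : A, z ≤ z' → ld x z ≤ ld x z' := fun x z z' h => by
    have h1 : mul x (ld x z) ≤ z := (resL x (ld x z) z).mpr le_rfl
    exact (resL x _ z').mp (h1.trans h)
  have ldanti : ∀ x x' z : A, x ≤ x' → ld x' z ≤ ld x z := fun x x' z h => by
    have h1 : mul x' (ld x' z) ≤ z := (resL _ _ _).mpr le_rfl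
    have h2 : mul x (ld x' z) ≤ mul x' (ld x' z) :=
      (resR _ _ _).mpr (h.trans ((resR _ _ _).mp le_rfl))
    exact (resL _ _ _).mp (h2.trans h1)
  constructor
  · intro H x y z w
    calc ld (x ⊓ y) (z ⊓ w) = ld x (z ⊓ w) ⊔ ld y (z ⊓ w) := H x y (z ⊓ w)
      _ ≤ ld x z ⊔ ld y w :=
        sup_le_sup (ldmono _ _ _ inf_le_left) (ldmono _ _ _ inf_le_right)
  · intro H x y z
    apply le_antisymm
    · simpa using H x y z z
    · exact sup_le (ldanti _ _ _ inf_le_left) (ldanti _ _ _ inf_le_right)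
end

section
/- A residuated binar satisfies the identity z/(x ∧ y) = (z/x) ∨ (z/y) (for all x,y,z) if and only if it satisfies (z ∧ w)/(x ∧ y) ≤ (z/x) ∨ (w/y) for all x,y,z,w. -/
theorem stmt6 {A : Type*} [Lattice A] (mul ld rd : A → A → A)
    (resR : ∀ x y z : A, mul x y ≤ z ↔ x ≤ rd z y)
    (resL : ∀ x y z : A, mul x y ≤ z ↔ y ≤ ld x z) :
    (∀ x y z : A, rd z (x ⊓ y) = rd z x ⊔ rd z y) ↔
    (∀ x y z w : A, rd (z ⊓ w) (x ⊓ y) ≤ rd z x ⊔ rd w y) := by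
  have rdMono : ∀ a b c : A, a ≤ b → rd a c ≤ rd b c := by
    intro a b c hab
    exact (resR _ _ _).mp (le_trans ((resR _ _ _).mpr le_rfl) hab)
  have mulMono : ∀ a b b' : A, b ≤ b' → mul a b ≤ mul a b' := by
    intro a b b' h
    exact (resL _ _ _).mpr (le_trans h ((resL _ _ _).mp le_rfl))
  have rdAnti : ∀ z x y : A, x ≤ y → rd z y ≤ rd z x := by
    intro z x y h
    exact (resR _ _ _).mp (le_trans (mulMono _ _ _ h) ((resR _ _ _).mpr le_rfl))
  constructor
  · intro h x y z w
    calc rd (z ⊓ w) (x ⊓ y) = rd (z ⊓ w) x ⊔ rd (z ⊓ w) y := h x y _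
      _ ≤ rd z x ⊔ rd w y :=
        sup_le_sup (rdMono _ _ _ inf_le_left) (rdMono _ _ _ inf_le_right)
  · intro h x y z
    apply le_antisymm
    · have := h x y z z
      simpa using this
    · exact sup_le (rdAnti _ _ _ inf_le_left) (rdAnti _ _ _ inf_le_right)
end

section
/- Let A be a residuated binar whose lattice reduct is distributive. If A satisfies (x ∨ y)/z = (x/z) ∨ (y/z) and (x ∧ y)\z = (x\z) ∨ (y\z) for all x,y,z, then A also satisfies x\(y ∨ z) = (x\y) ∨ (x\z) for all x,y,z. -/
theorem stmt7 {A : Type*} [DistribLattice A] (mul ld rd : A → A → A)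
    (resR : ∀ x y z : A, mul x y ≤ z ↔ x ≤ rd z y)
    (resL : ∀ x y z : A, mul x y ≤ z ↔ y ≤ ld x z)
    (h1 : ∀ x y z : A, rd (x ⊔ y) z = rd x z ⊔ rd y z)
    (h2 : ∀ x y z : A, ld (x ⊓ y) z = ld x z ⊔ ld y z) :
    ∀ x y z : A, ld x (y ⊔ z) = ld x y ⊔ ld x z := by
  -- basic facts
  have mulLd : ∀ a c : A, mul a (ld a c) ≤ c := fun a c => (resL a (ld a c) c).2 le_rfl
  have rdMul : ∀ c b : A, mul (rd c b) b ≤ c := fun c b => (resR (rd c b) b c).2 le_rfl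
  have mono_l : ∀ {a b : A} (s : A), a ≤ b → mul a s ≤ mul b s := by
    intro a b s hab
    exact (resR a s (mul b s)).2 (le_trans hab ((resR b s (mul b s)).1 le_rfl))
  have mono_r : ∀ (a : A) {s t : A}, s ≤ t → mul a s ≤ mul a t := by
    intro a s t hst
    exact (resL a s (mul a t)).2 (le_trans hst ((resL a t (mul a t)).1 le_rfl))
  have ld_mono : ∀ (a : A) {c d : A}, c ≤ d → ld a c ≤ ld a d := by
    intro a c d hcd
    exact (resL a (ld a c) d).1 (le_trans (mulLd a c) hcd)
  -- key claim: t ≤ (z/t)\y ⊔ (y/t)\z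
  have claim : ∀ t y z : A, t ≤ ld (rd z t) y ⊔ ld (rd y t) z := by
    intro t y z
    set p := rd y t
    set q := rd z t
    have hpq : mul (p ⊓ q) t ≤ y ⊓ z :=
      le_inf (le_trans (mono_l t inf_le_left) (rdMul y t))
             (le_trans (mono_l t inf_le_right) (rdMul z t))
    have ht : t ≤ ld (p ⊓ q) (y ⊓ z) := (resL (p ⊓ q) t (y ⊓ z)).1 hpq
    rw [h2] at ht
    refine le_trans ht ?_
    rw [sup_comm]
    exact sup_le_sup (ld_mono q inf_le_left) (ld_mono p inf_le_right)
  intro x y z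
  apply le_antisymm
  · set w := ld x (y ⊔ z) with hw
    set p := rd y w
    set q := rd z w
    have hxw : mul x w ≤ y ⊔ z := mulLd x (y ⊔ z)
    have hx : x ≤ p ⊔ q := by
      have := (resR x w (y ⊔ z)).1 hxw
      rwa [h1] at this
    have hwp : w ≤ ld p y := (resL p w y).1 (rdMul y w)
    have hwq : w ≤ ld q z := (resL q w z).1 (rdMul z w)
    have hcross : w ≤ ld q y ⊔ ld p z := claim w y z
    -- ld p c ⊓ ld q c ≤ ld x c
    have hmix : ∀ c : A, ld p c ⊓ ld q c ≤ ld x c := by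
      intro c
      set s := ld p c ⊓ ld q c with hs
      have hp : mul p s ≤ c := le_trans (mono_r p inf_le_left) (mulLd p c)
      have hq : mul q s ≤ c := le_trans (mono_r q inf_le_right) (mulLd q c)
      have hpqs : mul (p ⊔ q) s ≤ c :=
        (resR (p ⊔ q) s c).2 (sup_le ((resR p s c).1 hp) ((resR q s c).1 hq))
      exact (resL x s c).1 (le_trans (mono_l s hx) hpqs)
    -- distributivity assembly
    have : w ≤ (ld p y ⊓ ld q z) ⊓ (ld q y ⊔ ld p z) :=
      le_inf (le_inf hwp hwq) hcross
    refine le_trans this ?_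
    rw [inf_sup_left]
    refine sup_le ?_ ?_
    · exact le_trans (le_inf (le_trans inf_le_left inf_le_left) inf_le_right)
        (le_trans (hmix y) le_sup_left)
    · exact le_trans (le_inf inf_le_right (le_trans inf_le_left inf_le_right))
        (le_trans (hmix z) le_sup_right)
  · exact sup_le (ld_mono x le_sup_left) (ld_mono x le_sup_right)
end

section
/- Let A be a residuated binar whose lattice reduct is distributive. If A satisfies x\(y ∨ z) = (x\y) ∨ (x\z) and z/(x ∧ y) = (z/x) ∨ (z/y) for all x,y,z, then A also satisfies (x ∨ y)/z = (x/z) ∨ (y/z) for all x,y,z. -/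
theorem stmt8 {A : Type*} [DistribLattice A] (mul ld rd : A → A → A)
    (resR : ∀ x y z : A, mul x y ≤ z ↔ x ≤ rd z y)
    (resL : ∀ x y z : A, mul x y ≤ z ↔ y ≤ ld x z)
    (h1 : ∀ x y z : A, ld x (y ⊔ z) = ld x y ⊔ ld x z)
    (h2 : ∀ x y z : A, rd z (x ⊓ y) = rd z x ⊔ rd z y) :
    ∀ x y z : A, rd (x ⊔ y) z = rd x z ⊔ rd y z := by
  -- mul is monotone in its right argument
  have mulR : ∀ a b b' : A, b ≤ b' → mul a b ≤ mul a b' := fun a b b' h =>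
    (resL a b (mul a b')).mpr (h.trans ((resL a b' (mul a b')).mp le_rfl))
  -- rd is monotone in its first argument (numerator)
  have rdMono : ∀ c d b : A, c ≤ d → rd c b ≤ rd d b := fun c d b h =>
    (resR _ b d).mp (((resR _ b c).mpr le_rfl).trans h)
  intro x y z
  apply le_antisymm
  · set u := rd (x ⊔ y) z with hu
    have h0 : mul u z ≤ x ⊔ y := (resR u z (x ⊔ y)).mpr le_rfl
    set a := ld u x with ha
    set b := ld u y with hb
    have hz : z ≤ a ⊔ b := by
      have := (resL u z (x ⊔ y)).mp h0
      rwa [h1] at this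
    have hua : mul u a ≤ x := (resL u a x).mpr le_rfl
    have hub : mul u b ≤ y := (resL u b y).mpr le_rfl
    have hup : u ≤ rd x a := (resR u a x).mp hua
    have hus : u ≤ rd y b := (resR u b y).mp hub
    have hxy : mul u (a ⊓ b) ≤ x ⊓ y :=
      le_inf ((mulR u _ a inf_le_left).trans hua) ((mulR u _ b inf_le_right).trans hub)
    have h5 : u ≤ rd x b ⊔ rd y a := by
      have h5' : u ≤ rd (x ⊓ y) (a ⊓ b) := (resR _ _ _).mp hxy
      rw [h2] at h5'
      refine h5'.trans ?_
      exact le_trans (sup_le_sup (rdMono _ _ _ inf_le_right) (rdMono _ _ _ inf_le_left))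
        (sup_comm _ _).le
    -- assemble using distributivity
    have key : u ≤ (rd x a ⊓ rd x b) ⊔ (rd y a ⊓ rd y b) := by
      have hdec : u = (u ⊓ rd x b) ⊔ (u ⊓ rd y a) := by
        rw [← inf_sup_left]
        exact (inf_eq_left.mpr h5).symm
      calc u = (u ⊓ rd x b) ⊔ (u ⊓ rd y a) := hdec
        _ ≤ (rd x a ⊓ rd x b) ⊔ (rd y a ⊓ rd y b) :=
          sup_le_sup (inf_le_inf_right _ hup)
            (le_inf inf_le_right (inf_le_left.trans hus))
    -- each meet is below the corresponding rd _ z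
    have step : ∀ w : A, rd w a ⊓ rd w b ≤ rd w z := by
      intro w
      have hca : mul (rd w a ⊓ rd w b) a ≤ w := (resR _ a w).mpr inf_le_left
      have hcb : mul (rd w a ⊓ rd w b) b ≤ w := (resR _ b w).mpr inf_le_right
      have hab : mul (rd w a ⊓ rd w b) (a ⊔ b) ≤ w :=
        (resL _ _ _).mpr (sup_le ((resL _ _ _).mp hca) ((resL _ _ _).mp hcb))
      exact (resR _ z w).mp ((mulR _ z (a ⊔ b) hz).trans hab)
    exact key.trans (sup_le_sup (step x) (step y))
  · exact sup_le (rdMono x (x ⊔ y) z le_sup_left) (rdMono y (x ⊔ y) z le_sup_right)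
end

section
/- Let A be a residuated binar whose lattice reduct is distributive. If A satisfies x·(y ∧ z) = x·y ∧ x·z and (x ∨ y)/z = (x/z) ∨ (y/z) for all x,y,z, then A also satisfies z/(x ∧ y) = (z/x) ∨ (z/y) for all x,y,z. -/
theorem stmt9 {A : Type*} [DistribLattice A] (mul ld rd : A → A → A)
    (resR : ∀ x y z : A, mul x y ≤ z ↔ x ≤ rd z y)
    (resL : ∀ x y z : A, mul x y ≤ z ↔ y ≤ ld x z)
    (h1 : ∀ x y z : A, mul x (y ⊓ z) = mul x y ⊓ mul x z)
    (h2 : ∀ x y z : A, rd (x ⊔ y) z = rd x z ⊔ rd y z) :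
    ∀ x y z : A, rd z (x ⊓ y) = rd z x ⊔ rd z y := by
  -- mul monotone in the second argument
  have mono2 : ∀ v y y' : A, y ≤ y' → mul v y ≤ mul v y' := by
    intro v y y' hyy
    have := h1 v y y'
    rw [inf_eq_left.mpr hyy] at this
    rw [this]; exact inf_le_right
  -- mul monotone in the first argument
  have mono1 : ∀ w a y : A, w ≤ a → mul w y ≤ mul a y := by
    intro w a y hwa
    have h : a ≤ rd (mul a y) y := (resR a y (mul a y)).mp le_rfl
    exact (resR w y (mul a y)).mpr (le_trans hwa h)
  -- rd antitone in the denominator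
  have anti : ∀ w s t : A, s ≤ t → rd w t ≤ rd w s := by
    intro w s t hst
    refine (resR (rd w t) s w).mp ?_ |> fun h => h
    · exact le_trans (mono2 _ _ _ hst) ((resR (rd w t) t w).mpr le_rfl)
  intro x y z
  set a := rd z (x ⊓ y) with ha
  have haz : mul a (x ⊓ y) ≤ z := (resR a (x ⊓ y) z).mpr le_rfl
  have hmeet : mul a x ⊓ mul a y ≤ z := by rw [← h1]; exact haz
  -- mul a preserves joins (the needed direction)
  have hjoin : mul a (x ⊔ y) ≤ mul a x ⊔ mul a y := by
    have hx : x ≤ ld a (mul a x ⊔ mul a y) :=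
      (resL a x _).mp le_sup_left
    have hy : y ≤ ld a (mul a x ⊔ mul a y) :=
      (resL a y _).mp le_sup_right
    exact (resL a (x ⊔ y) _).mpr (sup_le hx hy)
  -- crux: a ≤ rd (mul a x) y ⊔ rd (mul a y) x
  have star : a ≤ rd (mul a x) y ⊔ rd (mul a y) x := by
    have h0 : a ≤ rd (mul a x ⊔ mul a y) (x ⊔ y) :=
      (resR a (x ⊔ y) _).mp hjoin
    rw [h2] at h0
    refine le_trans h0 (sup_le_sup ?_ ?_)
    · exact anti _ _ _ le_sup_right
    · exact anti _ _ _ le_sup_left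
  apply le_antisymm
  · -- a ≤ rd z x ⊔ rd z y
    have hsplit : a = (a ⊓ rd (mul a x) y) ⊔ (a ⊓ rd (mul a y) x) := by
      rw [← inf_sup_left]
      exact (inf_eq_left.mpr star).symm
    rw [hsplit]
    apply sup_le
    · -- a ⊓ rd (mul a x) y ≤ rd z y
      apply le_sup_of_le_right
      apply (resR _ y z).mp
      have h1' : mul (a ⊓ rd (mul a x) y) y ≤ mul a y := mono1 _ _ _ inf_le_left
      have h2' : mul (a ⊓ rd (mul a x) y) y ≤ mul a x := by
        have : a ⊓ rd (mul a x) y ≤ rd (mul a x) y := inf_le_right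
        exact (resR _ y (mul a x)).mpr this
      exact le_trans (le_inf h2' h1') hmeet
    · -- a ⊓ rd (mul a y) x ≤ rd z x
      apply le_sup_of_le_left
      apply (resR _ x z).mp
      have h1' : mul (a ⊓ rd (mul a y) x) x ≤ mul a x := mono1 _ _ _ inf_le_left
      have h2' : mul (a ⊓ rd (mul a y) x) x ≤ mul a y :=
        (resR _ x (mul a y)).mpr inf_le_right
      exact le_trans (le_inf h1' h2') hmeet
  · -- rd z x ⊔ rd z y ≤ a
    apply sup_le
    · exact anti z _ _ inf_le_left
    · exact anti z _ _ inf_le_right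
end

section
/- Let A be a residuated binar whose lattice reduct is distributive. If A satisfies (x ∧ y)·z = x·z ∧ y·z and x\(y ∨ z) = (x\y) ∨ (x\z) for all x,y,z, then A also satisfies (x ∧ y)\z = (x\z) ∨ (y\z) for all x,y,z. -/
theorem stmt10 {A : Type*} [DistribLattice A] (mul ld rd : A → A → A)
    (resR : ∀ x y z : A, mul x y ≤ z ↔ x ≤ rd z y)
    (resL : ∀ x y z : A, mul x y ≤ z ↔ y ≤ ld x z)
    (h1 : ∀ x y z : A, mul (x ⊓ y) z = mul x z ⊓ mul y z)
    (h2 : ∀ x y z : A, ld x (y ⊔ z) = ld x y ⊔ ld x z) :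
    ∀ x y z : A, ld (x ⊓ y) z = ld x z ⊔ ld y z := by
  -- basic consequences of residuation
  have ldle : ∀ x t : A, mul x (ld x t) ≤ t := fun x t => (resL x (ld x t) t).mpr le_rfl
  have unit : ∀ x t : A, t ≤ ld x (mul x t) := fun x t => (resL x t (mul x t)).mp le_rfl
  have mono2 : ∀ (x : A) {s t : A}, s ≤ t → mul x s ≤ mul x t := by
    intro x s t h
    exact (resL x s (mul x t)).mpr (le_trans h (unit x t))
  have mono1 : ∀ {a b : A} (c : A), a ≤ b → mul a c ≤ mul b c := by
    intro a b c h
    exact (resR a c (mul b c)).mpr (le_trans h ((resR b c (mul b c)).mp le_rfl))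
  have ldmono : ∀ (x : A) {s t : A}, s ≤ t → ld x s ≤ ld x t := by
    intro x s t h
    exact (resL x (ld x s) t).mp (le_trans (ldle x s) h)
  have mulsup : ∀ x y s : A, mul (x ⊔ y) s ≤ mul x s ⊔ mul y s := by
    intro x y s
    exact (resR _ s _).mpr (sup_le ((resR x s _).mp le_sup_left) ((resR y s _).mp le_sup_right))
  -- ld x preserves meets in the second argument
  have ldinf : ∀ x s t : A, ld x (s ⊓ t) = ld x s ⊓ ld x t := by
    intro x s t
    refine le_antisymm (le_inf (ldmono x inf_le_left) (ldmono x inf_le_right)) ?_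
    refine (resL x _ _).mp (le_inf ?_ ?_)
    · exact le_trans (mono2 x inf_le_left) (ldle x s)
    · exact le_trans (mono2 x inf_le_right) (ldle x t)
  -- ld (x ⊔ y) t = ld x t ⊓ ld y t
  have ldsupx : ∀ x y t : A, ld (x ⊔ y) t = ld x t ⊓ ld y t := by
    intro x y t
    refine le_antisymm (le_inf ?_ ?_) ?_
    · exact (resL x _ t).mp (le_trans (mono1 _ le_sup_left) (ldle (x ⊔ y) t))
    · exact (resL y _ t).mp (le_trans (mono1 _ le_sup_right) (ldle (x ⊔ y) t))
    · refine (resL _ _ t).mp (le_trans (mulsup x y _) (sup_le ?_ ?_))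
      · exact le_trans (mono2 x inf_le_left) (ldle x t)
      · exact le_trans (mono2 y inf_le_right) (ldle y t)
  intro x y z
  refine le_antisymm ?_ (sup_le ?_ ?_)
  · -- hard direction
    set w := ld (x ⊓ y) z with hw
    set p := mul x w with hp
    set q := mul y w with hq
    have hpq : p ⊓ q ≤ z := by
      rw [hp, hq, ← h1]; exact ldle (x ⊓ y) z
    have hwp : w ≤ ld x p := unit x w
    have hwq : w ≤ ld y q := unit y w
    -- crossed inequality via h2 at x ⊔ y
    have crux : w ≤ ld x q ⊔ ld y p := by
      have key : ld x p ⊓ ld y q ≤ ld x q ⊔ ld y p := by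
        have e : ld x (p ⊔ q) ⊓ ld y (p ⊔ q) = (ld x p ⊓ ld y p) ⊔ (ld x q ⊓ ld y q) := by
          rw [← ldsupx, ← ldsupx, ← ldsupx, h2]
        have l1 : ld x p ⊓ ld y q ≤ ld x (p ⊔ q) ⊓ ld y (p ⊔ q) :=
          inf_le_inf (ldmono x le_sup_left) (ldmono y le_sup_right)
        rw [e] at l1
        exact le_trans l1 (sup_le (le_sup_right.trans' inf_le_right)
          (le_sup_left.trans' inf_le_left))
      exact le_trans (le_inf hwp hwq) key
    have hz : z = (z ⊔ p) ⊓ (z ⊔ q) := by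
      rw [← sup_inf_left, sup_eq_left.mpr hpq]
    have hu : w ⊓ ld x q ≤ ld x z := by
      have e : ld x z = (ld x z ⊔ ld x p) ⊓ (ld x z ⊔ ld x q) := by
        conv_lhs => rw [hz]
        rw [ldinf, h2, h2]
      calc w ⊓ ld x q ≤ ld x p ⊓ ld x q := inf_le_inf_right _ hwp
        _ ≤ (ld x z ⊔ ld x p) ⊓ (ld x z ⊔ ld x q) := inf_le_inf le_sup_right le_sup_right
        _ = ld x z := e.symm
    have hv : w ⊓ ld y p ≤ ld y z := by
      have e : ld y z = (ld y z ⊔ ld y p) ⊓ (ld y z ⊔ ld y q) := by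
        conv_lhs => rw [hz]
        rw [ldinf, h2, h2]
      calc w ⊓ ld y p ≤ ld y p ⊓ ld y q := le_inf inf_le_right (inf_le_left.trans hwq)
        _ ≤ (ld y z ⊔ ld y p) ⊓ (ld y z ⊔ ld y q) :=
            inf_le_inf le_sup_right le_sup_right
        _ = ld y z := e.symm
    calc w = w ⊓ (ld x q ⊔ ld y p) := (inf_eq_left.mpr crux).symm
      _ = (w ⊓ ld x q) ⊔ (w ⊓ ld y p) := inf_sup_left _ _ _
      _ ≤ ld x z ⊔ ld y z := sup_le_sup hu hv
  · exact (resL _ _ z).mp (le_trans (mono1 _ inf_le_left) (ldle x z))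
  · exact (resL _ _ z).mp (le_trans (mono1 _ inf_le_right) (ldle y z))
end

section
/- Let A be a residuated binar whose lattice reduct is distributive. If A satisfies (x ∧ y)\z = (x\z) ∨ (y\z) and x·(y ∧ z) = x·y ∧ x·z for all x,y,z, then A also satisfies (x ∧ y)·z = x·z ∧ y·z for all x,y,z. -/
theorem stmt11 {A : Type*} [DistribLattice A] (mul ld rd : A → A → A)
    (resR : ∀ x y z : A, mul x y ≤ z ↔ x ≤ rd z y)
    (resL : ∀ x y z : A, mul x y ≤ z ↔ y ≤ ld x z)
    (h1 : ∀ x y z : A, ld (x ⊓ y) z = ld x z ⊔ ld y z)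
    (h2 : ∀ x y z : A, mul x (y ⊓ z) = mul x y ⊓ mul x z) :
    ∀ x y z : A, mul (x ⊓ y) z = mul x z ⊓ mul y z := by
  -- monotonicity in the first argument
  have mono1 : ∀ {u u' : A} (v : A), u ≤ u' → mul u v ≤ mul u' v := by
    intro u u' v h
    have h' : u' ≤ rd (mul u' v) v := (resR u' v (mul u' v)).mp le_rfl
    exact (resR u v (mul u' v)).mpr (le_trans h h')
  -- monotonicity in the second argument
  have mono2 : ∀ (u : A) {v v' : A}, v ≤ v' → mul u v ≤ mul u v' := by
    intro u v v' h
    have h' : v' ≤ ld u (mul u v') := (resL u v' (mul u v')).mp le_rfl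
    exact (resL u v (mul u v')).mpr (le_trans h h')
  -- mul preserves joins in the first argument
  have jp1 : ∀ u v t : A, mul (u ⊔ v) t = mul u t ⊔ mul v t := by
    intro u v t
    apply le_antisymm
    · apply (resR (u ⊔ v) t (mul u t ⊔ mul v t)).mpr
      apply sup_le
      · exact (resR u t (mul u t ⊔ mul v t)).mp (le_sup_left)
      · exact (resR v t (mul u t ⊔ mul v t)).mp (le_sup_right)
    · exact sup_le (mono1 t le_sup_left) (mono1 t le_sup_right)
  -- mul preserves joins in the second argument
  have jp2 : ∀ u v t : A, mul t (u ⊔ v) = mul t u ⊔ mul t v := by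
    intro u v t
    apply le_antisymm
    · apply (resL t (u ⊔ v) (mul t u ⊔ mul t v)).mpr
      apply sup_le
      · exact (resL t u (mul t u ⊔ mul t v)).mp (le_sup_left)
      · exact (resL t v (mul t u ⊔ mul t v)).mp (le_sup_right)
    · exact sup_le (mono2 t le_sup_left) (mono2 t le_sup_right)
  -- counit
  have counit : ∀ s u : A, mul s (ld s u) ≤ u := fun s u =>
    (resL s (ld s u) u).mpr le_rfl
  intro x y z
  set w := mul (x ⊓ y) z with hw
  set a := ld x w with ha
  set b := ld y w with hb
  apply le_antisymm
  · exact le_inf (mono1 z inf_le_left) (mono1 z inf_le_right)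
  -- hard direction
  have hz : z ≤ a ⊔ b := by
    have : z ≤ ld (x ⊓ y) w := (resL (x ⊓ y) z w).mp le_rfl
    rwa [h1 x y w] at this
  set c := z ⊓ a with hc
  set d := z ⊓ b with hd
  have hzcd : z = c ⊔ d := by
    rw [hc, hd, ← inf_sup_left, inf_eq_left.mpr hz]
  have hxa : mul x a ≤ w := counit x w
  have hyb : mul y b ≤ w := counit y w
  have hxc : mul x c ≤ w := le_trans (mono2 x inf_le_right) hxa
  have hyd : mul y d ≤ w := le_trans (mono2 y inf_le_right) hyb
  -- cross term
  have hcross : mul x d ⊓ mul y c ≤ w := by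
    have e1 : mul x d ⊓ mul y c ≤ mul (x ⊔ y) d ⊓ mul (x ⊔ y) c :=
      inf_le_inf (mono1 d le_sup_left) (mono1 c le_sup_right)
    have e2 : mul (x ⊔ y) d ⊓ mul (x ⊔ y) c = mul (x ⊔ y) (d ⊓ c) :=
      (h2 (x ⊔ y) d c).symm
    have e3 : mul (x ⊔ y) (d ⊓ c) = mul x (d ⊓ c) ⊔ mul y (d ⊓ c) := jp1 x y (d ⊓ c)
    have e4 : mul x (d ⊓ c) ≤ w := le_trans (mono2 x inf_le_right) hxc
    have e5 : mul y (d ⊓ c) ≤ w := le_trans (mono2 y inf_le_left) hyd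
    calc mul x d ⊓ mul y c ≤ mul (x ⊔ y) d ⊓ mul (x ⊔ y) c := e1
      _ = mul (x ⊔ y) (d ⊓ c) := e2
      _ = mul x (d ⊓ c) ⊔ mul y (d ⊓ c) := e3
      _ ≤ w := sup_le e4 e5
  have hx : mul x z = mul x c ⊔ mul x d := by rw [hzcd]; exact jp2 c d x
  have hy : mul y z = mul y c ⊔ mul y d := by rw [hzcd]; exact jp2 c d y
  rw [hx, hy, inf_sup_left, inf_sup_right, inf_sup_right]
  apply sup_le <;> apply sup_le
  · exact le_trans inf_le_left hxc
  · exact hcross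
  · exact le_trans inf_le_left hxc
  · exact le_trans inf_le_right hyd
end

section
/- Let A be a residuated binar whose lattice reduct is distributive. If A satisfies z/(x ∧ y) = (z/x) ∨ (z/y) and (x ∧ y)·z = x·z ∧ y·z for all x,y,z, then A also satisfies x·(y ∧ z) = x·y ∧ x·z for all x,y,z. -/
theorem stmt12 {A : Type*} [DistribLattice A] (mul ld rd : A → A → A)
    (resR : ∀ x y z : A, mul x y ≤ z ↔ x ≤ rd z y)
    (resL : ∀ x y z : A, mul x y ≤ z ↔ y ≤ ld x z)
    (h1 : ∀ x y z : A, rd z (x ⊓ y) = rd z x ⊔ rd z y)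
    (h2 : ∀ x y z : A, mul (x ⊓ y) z = mul x z ⊓ mul y z) :
    ∀ x y z : A, mul x (y ⊓ z) = mul x y ⊓ mul x z := by
  intro x y z
  have mono2 : ∀ p q w : A, q ≤ w → mul p q ≤ mul p w := fun p q w h =>
    (resL p q (mul p w)).2 (h.trans ((resL p w (mul p w)).1 le_rfl))
  set u := mul x (y ⊓ z) with hu
  apply le_antisymm
  · exact le_inf (mono2 x _ y inf_le_left) (mono2 x _ z inf_le_right)
  · set a := x ⊓ rd u y with ha
    set b := x ⊓ rd u z with hb
    have hx : x ≤ rd u y ⊔ rd u z := by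
      rw [← h1]; exact (resR x (y ⊓ z) u).1 le_rfl
    have hxab : x = a ⊔ b := by
      rw [ha, hb, ← inf_sup_left]; exact (inf_eq_left.2 hx).symm
    have hay : mul a y ≤ u := (resR a y u).2 inf_le_right
    have hbz : mul b z ≤ u := (resR b z u).2 inf_le_right
    have hsplit : ∀ w : A, mul x w ≤ mul a w ⊔ mul b w := by
      intro w
      conv_lhs => rw [hxab]
      exact (resR _ w _).2 (sup_le ((resR a w _).1 le_sup_left)
        ((resR b w _).1 le_sup_right))
    have cross : mul b y ⊓ mul a z ≤ u := by
      have h3 : mul b y ⊓ mul a z ≤ mul (a ⊓ b) (y ⊔ z) := by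
        rw [h2 a b (y ⊔ z)]
        exact le_inf (inf_le_right.trans (mono2 a z _ le_sup_right))
          (inf_le_left.trans (mono2 b y _ le_sup_left))
      refine h3.trans ((resL _ _ _).2 (sup_le ?_ ?_))
      · exact (resL _ y u).1 ((resR _ y u).2 (inf_le_left.trans inf_le_right))
      · exact (resL _ z u).1 ((resR _ z u).2 (inf_le_right.trans inf_le_right))
    calc mul x y ⊓ mul x z
        ≤ (mul a y ⊔ mul b y) ⊓ (mul a z ⊔ mul b z) :=
          inf_le_inf (hsplit y) (hsplit z)
      _ ≤ u := by
          rw [inf_sup_right, inf_sup_left, inf_sup_left]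
          exact sup_le (sup_le (inf_le_left.trans hay)
            (inf_le_left.trans hay))
            (sup_le cross (inf_le_right.trans hbz))
end

section
/- Let A be a unital residuated binar (with multiplicative identity e) whose lattice reduct has a top ⊤ and bottom ⊥, and suppose every element has a lattice complement. If A is integral (x ≤ e for all x), then x·y = x ∧ y for all x,y. -/
theorem stmt14 {A : Type*} [Lattice A] [BoundedOrder A] (mul ld rd : A → A → A) (e : A)
    (resR : ∀ x y z : A, mul x y ≤ z ↔ x ≤ rd z y)
    (resL : ∀ x y z : A, mul x y ≤ z ↔ y ≤ ld x z)
    (unitL : ∀ x : A, mul e x = x) (unitR : ∀ x : A, mul x e = x)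
    (compl : ∀ x : A, ∃ x' : A, x ⊓ x' = ⊥ ∧ x ⊔ x' = ⊤)
    (int : ∀ x : A, x ≤ e) :
    ∀ x y : A, mul x y = x ⊓ y := by
  -- monotonicity in each argument
  have monoL : ∀ a b c : A, a ≤ b → mul a c ≤ mul b c := by
    intro a b c hab
    exact (resR a c (mul b c)).mpr (le_trans hab ((resR b c (mul b c)).mp le_rfl))
  have monoR : ∀ a b c : A, a ≤ b → mul c a ≤ mul c b := by
    intro a b c hab
    exact (resL c a (mul c b)).mpr (le_trans hab ((resL c b (mul c b)).mp le_rfl))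
  have etop : e = ⊤ := le_antisymm le_top (int ⊤)
  -- mul x y ≤ x and ≤ y
  have hlex : ∀ x y : A, mul x y ≤ x := fun x y =>
    le_trans (monoR y e x (int y)) (le_of_eq (unitR x))
  have hley : ∀ x y : A, mul x y ≤ y := fun x y =>
    le_trans (monoL x e y (int x)) (le_of_eq (unitL y))
  -- idempotency-ish: z ≤ mul z z
  have key : ∀ z : A, z ≤ mul z z := by
    intro z
    obtain ⟨z', h1, h2⟩ := compl z
    have hbot : mul z z' = ⊥ := by
      have : mul z z' ≤ z ⊓ z' := le_inf (hlex z z') (hley z z')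
      exact le_antisymm (h1 ▸ this) bot_le
    have hsup : mul z (z ⊔ z') ≤ mul z z ⊔ mul z z' :=
      (resL z (z ⊔ z') _).mpr (sup_le
        ((resL z z _).mp le_sup_left)
        ((resL z z' _).mp le_sup_right))
    have hz : z = mul z (z ⊔ z') := by rw [h2, ← etop, unitR]
    calc z = mul z (z ⊔ z') := hz
      _ ≤ mul z z ⊔ mul z z' := hsup
      _ = mul z z := by rw [hbot, sup_bot_eq]
  intro x y
  refine le_antisymm (le_inf (hlex x y) (hley x y)) ?_
  calc x ⊓ y ≤ mul (x ⊓ y) (x ⊓ y) := key _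
    _ ≤ mul x (x ⊓ y) := monoL _ _ _ inf_le_left
    _ ≤ mul x y := monoR _ _ _ inf_le_right
end

section
/- Let A be a unital residuated binar with identity e, top ⊤, and bottom ⊥, and suppose e has a complement e' (i.e., e ∧ e' = ⊥ and e ∨ e' = ⊤). If A satisfies x·(y ∧ z) = x·y ∧ x·z for all x,y,z, then A is integral, i.e., e = ⊤. -/
theorem stmt15 {A : Type*} [Lattice A] [BoundedOrder A] (mul ld rd : A → A → A) (e e' : A)
    (resR : ∀ x y z : A, mul x y ≤ z ↔ x ≤ rd z y)
    (resL : ∀ x y z : A, mul x y ≤ z ↔ y ≤ ld x z)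
    (unitL : ∀ x : A, mul e x = x) (unitR : ∀ x : A, mul x e = x)
    (hmeet : e ⊓ e' = ⊥) (hjoin : e ⊔ e' = ⊤)
    (h : ∀ x y z : A, mul x (y ⊓ z) = mul x y ⊓ mul x z) :
    e = ⊤ := by
  -- x·⊥ = ⊥
  have hbot : ∀ x : A, mul x ⊥ = ⊥ := fun x =>
    le_antisymm ((resL x ⊥ ⊥).mpr bot_le) bot_le
  -- ⊤·e' = ⊥ : ⊤ = ⊤·e ⊓ ... use h ⊤ e e'
  have key : (⊤ : A) ⊓ mul ⊤ e' = ⊥ := by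
    have := h ⊤ e e'
    rw [hmeet, hbot, unitR] at this
    exact this.symm
  have htop : mul ⊤ e' = ⊥ := by rwa [top_inf_eq] at key
  -- monotone in first arg: e·e' ≤ ⊤·e'
  have hmono : mul e e' ≤ mul ⊤ e' := by
    have : (⊤ : A) ≤ rd (mul ⊤ e') e' := (resR ⊤ e' (mul ⊤ e')).mp le_rfl
    exact (resR e e' (mul ⊤ e')).mpr (le_top.trans this)
  have he' : e' = ⊥ := le_antisymm (by rw [unitL] at hmono; rwa [htop] at hmono) bot_le
  rw [he', sup_bot_eq] at hjoin
  exact hjoin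
end

section
/- Let A be a unital residuated binar with identity e, top ⊤, and bottom ⊥, and suppose e has a complement e'. If A satisfies (x ∧ y)\z = (x\z) ∨ (y\z) for all x,y,z, then A is integral, i.e., e = ⊤. -/
theorem stmt16 {A : Type*} [Lattice A] [BoundedOrder A] (mul ld rd : A → A → A) (e e' : A)
    (resR : ∀ x y z : A, mul x y ≤ z ↔ x ≤ rd z y)
    (resL : ∀ x y z : A, mul x y ≤ z ↔ y ≤ ld x z)
    (unitL : ∀ x : A, mul e x = x) (unitR : ∀ x : A, mul x e = x)
    (hmeet : e ⊓ e' = ⊥) (hjoin : e ⊔ e' = ⊤)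
    (h : ∀ x y z : A, ld (x ⊓ y) z = ld x z ⊔ ld y z) :
    e = ⊤ := by
  -- ld ⊥ ⊥ = ⊤
  have hbot : (⊤ : A) ≤ ld ⊥ ⊥ := by
    rw [← resL]
    rw [resR]
    exact bot_le
  have key := h e e' ⊥
  rw [hmeet] at key
  have hlde : ld e ⊥ = ⊥ := by
    have := (resL e (ld e ⊥) ⊥).mpr le_rfl
    rw [unitL] at this
    exact le_antisymm this bot_le
  have : ld e' ⊥ = ⊤ := by
    rw [hlde, bot_sup_eq] at key
    exact le_antisymm le_top (key ▸ hbot)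
  have he' : e' = ⊥ := by
    apply le_antisymm _ bot_le
    have : mul e' e ≤ ⊥ := by rw [resL, this]; exact le_top
    rwa [unitR] at this
  rw [← hjoin, he', sup_bot_eq]
end

section
/- Let A be a unital residuated binar whose lattice reduct is a Boolean algebra (so ∧ has a residual: x ∧ y ≤ z ⟺ y ≤ x' ∨ z). If A satisfies x\(y ∨ z) = (x\y) ∨ (x\z) for all x,y,z, then A is integral, i.e., e = ⊤. -/
theorem stmt17 {A : Type*} [BooleanAlgebra A] (mul ld rd : A → A → A) (e : A)
    (resR : ∀ x y z : A, mul x y ≤ z ↔ x ≤ rd z y)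
    (resL : ∀ x y z : A, mul x y ≤ z ↔ y ≤ ld x z)
    (unitL : ∀ x : A, mul e x = x) (unitR : ∀ x : A, mul x e = x)
    (h : ∀ x y z : A, ld x (y ⊔ z) = ld x y ⊔ ld x z) :
    e = ⊤ := by
  -- mul is monotone in the first argument, so ld is antitone in the first argument
  have anti : ∀ x x' z : A, x ≤ x' → ld x' z ≤ ld x z := by
    intro x x' z hx
    refine (resL x (ld x' z) z).mp ?_
    exact (resR x (ld x' z) z).mpr (le_trans hx ((resR x' (ld x' z) z).mp
      ((resL x' (ld x' z) z).mpr le_rfl)))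
  -- ld e z ≤ z
  have lde : ∀ z : A, ld e z ≤ z := by
    intro z
    have := (resL e (ld e z) z).mpr le_rfl
    rwa [unitL] at this
  have hu : ld ⊤ e ≤ e := le_trans (anti e ⊤ e le_top) (lde e)
  have hv : ld ⊤ eᶜ ≤ eᶜ := le_trans (anti e ⊤ eᶜ le_top) (lde eᶜ)
  have htop : ld ⊤ e ⊔ ld ⊤ eᶜ = ⊤ := by
    rw [← h]
    rw [sup_compl_eq_top]
    have : mul ⊤ ⊤ ≤ ⊤ := le_top
    exact top_le_iff.mp ((resL ⊤ ⊤ ⊤).mp this)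
  have he : e ≤ ld ⊤ e := by
    calc e = e ⊓ (ld ⊤ e ⊔ ld ⊤ eᶜ) := by rw [htop, inf_top_eq]
    _ = (e ⊓ ld ⊤ e) ⊔ (e ⊓ ld ⊤ eᶜ) := inf_sup_left e _ _
    _ ≤ ld ⊤ e ⊔ (e ⊓ eᶜ) := sup_le_sup inf_le_right (inf_le_inf_left e hv)
    _ = ld ⊤ e := by rw [inf_compl_eq_bot, sup_bot_eq]
  have : mul ⊤ e ≤ e := (resL ⊤ e e).mpr he
  rw [unitR] at this
  exact top_le_iff.mp this
end

section
/- Let A be a unital complemented residuated binar whose identity element e has a complement, and suppose A satisfies x·(y ∧ z) = x·y ∧ x·z for all x,y,z. Then x·y = x ∧ y for all x,y, and the lattice reduct of A is distributive (hence A is term-equivalent to a Boolean algebra). -/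
theorem stmt18 {A : Type*} [Lattice A] [BoundedOrder A] (mul ld rd : A → A → A) (e : A)
    (resR : ∀ x y z : A, mul x y ≤ z ↔ x ≤ rd z y)
    (resL : ∀ x y z : A, mul x y ≤ z ↔ y ≤ ld x z)
    (unitL : ∀ x : A, mul e x = x) (unitR : ∀ x : A, mul x e = x)
    (compl : ∀ x : A, ∃ x' : A, x ⊓ x' = ⊥ ∧ x ⊔ x' = ⊤)
    (h : ∀ x y z : A, mul x (y ⊓ z) = mul x y ⊓ mul x z) :
    (∀ x y : A, mul x y = x ⊓ y) ∧
    (∀ x y z : A, x ⊓ (y ⊔ z) = (x ⊓ y) ⊔ (x ⊓ z)) := by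
  have mono1 : ∀ {x x' : A} (y : A), x ≤ x' → mul x y ≤ mul x' y := by
    intro x x' y hx
    exact (resR x y (mul x' y)).mpr (hx.trans ((resR x' y (mul x' y)).mp le_rfl))
  have mono2 : ∀ (x : A) {y y' : A}, y ≤ y' → mul x y ≤ mul x y' := by
    intro x y y' hy
    have h1 : mul x (y ⊓ y') = mul x y ⊓ mul x y' := h x y y'
    rw [inf_eq_left.mpr hy] at h1
    rw [h1]; exact inf_le_right
  have mbot : ∀ x : A, mul x ⊥ = ⊥ := fun x =>
    le_bot_iff.mp ((resL x ⊥ ⊥).mpr bot_le)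
  -- integrality : e = ⊤
  have etop : e = ⊤ := by
    obtain ⟨e', h1, h2⟩ := compl e
    have hte : mul ⊤ e' = ⊥ := by
      have h3 := h ⊤ e e'
      rw [h1, mbot, unitR] at h3
      simpa using h3.symm
    have he' : e' = ⊥ := le_bot_iff.mp (by
      calc e' = mul e e' := (unitL e').symm
        _ ≤ mul ⊤ e' := mono1 e' le_top
        _ = ⊥ := hte)
    rw [he', sup_bot_eq] at h2
    exact h2
  have mtop : ∀ x : A, mul x ⊤ = x := fun x => by rw [← etop, unitR]
  have ttop : ∀ x : A, mul ⊤ x = x := fun x => by rw [← etop, unitL]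
  have le_inf' : ∀ x y : A, mul x y ≤ x ⊓ y := fun x y =>
    le_inf (by simpa [mtop] using mono2 x (le_top : y ≤ ⊤))
           (by simpa [ttop] using mono1 y (le_top : x ≤ ⊤))
  -- squares are faithful at ⊥
  have sq : ∀ t : A, mul t t = ⊥ → t = ⊥ := by
    intro t ht
    obtain ⟨d, h1, h2⟩ := compl t
    have hd : d ≤ ld t ⊥ := (resL t d ⊥).mp ((le_inf' t d).trans (le_of_eq h1))
    have htl : t ≤ ld t ⊥ := (resL t t ⊥).mp (le_of_eq ht)
    have htop : (⊤ : A) ≤ ld t ⊥ := h2 ▸ sup_le htl hd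
    have := (resL t ⊤ ⊥).mpr htop
    rw [mtop] at this
    exact le_bot_iff.mp this
  -- square increasing
  have key : ∀ a : A, a ≤ mul a a := by
    intro a
    set s := mul a a with hs
    obtain ⟨c, hc1, hc2⟩ := compl s
    set m := ld s ⊥ with hm
    have hsa : s ≤ a := (le_inf' a a).trans inf_le_left
    have hsm : mul s m ≤ ⊥ := (resL s m ⊥).mpr le_rfl
    have hcm : c ≤ m := (resL s c ⊥).mp ((le_inf' s c).trans (le_of_eq hc1))
    have hsmbot : s ⊓ m = ⊥ := sq _ (le_bot_iff.mp
      ((mono1 (s ⊓ m) (inf_le_left : s ⊓ m ≤ s)).trans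
        ((mono2 s (inf_le_right : s ⊓ m ≤ m)).trans hsm)))
    have ham : a ⊓ m = ⊥ := sq _ (le_bot_iff.mp (by
      have h1 : mul (a ⊓ m) (a ⊓ m) ≤ s :=
        (mono1 (a ⊓ m) (inf_le_left : a ⊓ m ≤ a)).trans (mono2 a inf_le_left)
      have h2 : mul (a ⊓ m) (a ⊓ m) ≤ m :=
        (le_inf' _ _).trans (inf_le_left.trans inf_le_right)
      exact (le_inf h1 h2).trans (le_of_eq hsmbot)))
    have hmam : mul a m = ⊥ := le_bot_iff.mp ((le_inf' a m).trans (le_of_eq ham))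
    have hm1 : m ≤ ld a s := (resL a m s).mp (hmam ▸ bot_le)
    have ha1 : a ≤ ld a s := (resL a a s).mp le_rfl
    have htop : (⊤ : A) ≤ ld a s := by
      have : (⊤ : A) ≤ a ⊔ m := hc2 ▸ sup_le_sup hsa hcm
      exact this.trans (sup_le ha1 hm1)
    have := (resL a ⊤ s).mpr htop
    rwa [mtop] at this
  have muleq : ∀ x y : A, mul x y = x ⊓ y := by
    intro x y
    refine le_antisymm (le_inf' x y) ?_
    calc x ⊓ y ≤ mul (x ⊓ y) (x ⊓ y) := key _
      _ ≤ mul x (x ⊓ y) := mono1 _ inf_le_left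
      _ ≤ mul x y := mono2 x inf_le_right
  refine ⟨muleq, fun x y z => ?_⟩
  refine le_antisymm ?_ (sup_le (inf_le_inf_left x le_sup_left)
    (inf_le_inf_left x le_sup_right))
  have hy : y ≤ ld x ((x ⊓ y) ⊔ (x ⊓ z)) :=
    (resL x y _).mp ((muleq x y).le.trans le_sup_left)
  have hz : z ≤ ld x ((x ⊓ y) ⊔ (x ⊓ z)) :=
    (resL x z _).mp ((muleq x z).le.trans le_sup_right)
  have := (resL x (y ⊔ z) ((x ⊓ y) ⊔ (x ⊓ z))).mpr (sup_le hy hz)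
  rwa [muleq] at this
end
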